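/- arXiv:1312.1113 — 2 statements merged into one kernel-verified Lean document; each statement's English description precedes it below -/
import Mathlib

section
/- Phragmén–Lindelöf argument used in Hardy's proof: if F is entire on ℂ, |F(z)| ≤ C e^{a|z|²} for all z ∈ ℂ, and |F(x)| ≤ C e^{-a x²} for all real x, then F(z) = c·e^{-a z²} for some constant c. -/
open Real Complex

/-!
Put `G z = F z * exp (a z²)`. On the real axis `‖G‖ ≤ C` by hypothesis, and on the imaginary
axis `‖G‖ ≤ C` by the growth bound; so by Liouville it suffices to show `‖G‖ ≤ C` in each closed
quadrant, and by the symmetries `F ↦ F ∘ neg` and `F ↦ conj ∘ F ∘ conj` in the first one.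
There `G` has order 2, which is critical for an angle `π / 2`. So one works in the sector
`0 ≤ arg z ≤ θ < π / 2` with `F z * exp ((a + i a cot θ) z²)`: this twist leaves the bound `C` on
the real axis and turns the growth bound into the bound `C` on the ray `arg z = θ`, hence
Phragmén–Lindelöf (through `exp`, in a horizontal strip) bounds it by `C` in the sector.
Letting `θ → π / 2` removes the twist.
-/

open Filter Topology ComplexConjugate

theorem PhragmenLindelof.sector {E : Type*} [NormedAddCommGroup E] [NormedSpace ℂ E]
    {f : ℂ → E} {θ ρ A B C : ℝ} (hf : Differentiable ℂ f) (hθ : 0 < θ) (hρ : 0 ≤ ρ)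
    (hρθ : ρ * θ < π) (hgrowth : ∀ z, ‖f z‖ ≤ A * Real.exp (B * ‖z‖ ^ ρ))
    (hreal : ∀ x : ℝ, 0 ≤ x → ‖f x‖ ≤ C) (hray : ∀ r : ℝ, 0 ≤ r → ‖f (r * exp (θ * I))‖ ≤ C)
    {z : ℂ} (hz₀ : 0 ≤ arg z) (hzθ : arg z ≤ θ) : ‖f z‖ ≤ C := by
  rcases eq_or_ne z 0 with rfl | hz
  · simpa using hreal 0 le_rfl
  rw [← exp_log hz]
  refine PhragmenLindelof.horizontal_strip (f := f ∘ exp) (a := 0) (b := θ)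
    (hf.comp differentiable_exp).diffContOnCl ⟨ρ, by rwa [sub_zero, lt_div_iff₀ hθ], |B|, ?_⟩
    (fun w hw => ?_) (fun w hw => ?_) (by rwa [log_im]) (by rwa [log_im])
  · refine .of_bound |A| (.of_forall fun w => ?_)
    have hexp : B * ‖exp w‖ ^ ρ ≤ |B| * Real.exp (ρ * |w.re|) := by
      rw [norm_exp, ← Real.exp_mul, mul_comm w.re]
      gcongr
      exacts [le_abs_self B, le_abs_self _]
    calc ‖f (exp w)‖ ≤ A * Real.exp (B * ‖exp w‖ ^ ρ) := hgrowth _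
      _ ≤ |A| * Real.exp (B * ‖exp w‖ ^ ρ) := by gcongr; exact le_abs_self A
      _ ≤ |A| * ‖Real.exp (|B| * Real.exp (ρ * |w.re|))‖ := by
        rw [Real.norm_eq_abs, Real.abs_exp]; gcongr
  · have : exp w = (Real.exp w.re : ℂ) := by
      rw [← re_add_im w, hw]; simp
    simpa [this] using hreal _ (Real.exp_pos _).le
  · have : exp w = (Real.exp w.re : ℂ) * exp (θ * I) := by
      rw [← re_add_im w, hw, Complex.exp_add, ofReal_exp]; simp
    simpa [this] using hray _ (Real.exp_pos _).le

theorem mul_exp_neg_le_of_le_mul_exp {x C t : ℝ} (h : x ≤ C * Real.exp t) :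
    x * Real.exp (-t) ≤ C := by
  calc x * Real.exp (-t) ≤ C * Real.exp t * Real.exp (-t) := by gcongr
    _ = C := by rw [mul_assoc, ← Real.exp_add, add_neg_cancel, Real.exp_zero, mul_one]

theorem re_mul_sq_ofReal_mul_exp_mul_I {a θ : ℝ} (hθ : Real.sin θ ≠ 0) (r : ℝ) :
    ((a + (a * Real.cot θ : ℝ) * I) * (r * exp (θ * I)) ^ 2).re = -(a * r ^ 2) := by
  have hsq : (r * exp (θ * I)) ^ 2 =
      (r ^ 2 * Real.cos (2 * θ) : ℝ) + (r ^ 2 * Real.sin (2 * θ) : ℝ) * I := by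
    rw [mul_pow, ← Complex.exp_nat_mul, show ((2 : ℕ) : ℂ) * (θ * I) = (2 * θ : ℝ) * I by
      push_cast; ring, exp_mul_I, ← ofReal_cos, ← ofReal_sin]
    push_cast; ring
  rw [hsq]
  simp only [add_re, add_im, mul_re, mul_im, ofReal_re, ofReal_im, I_re, I_im]
  rw [Real.cos_two_mul, Real.sin_two_mul, Real.cot_eq_cos_div_sin]
  field_simp
  ring

theorem Real.tendsto_cot_pi_div_two : Tendsto Real.cot (𝓝 (π / 2)) (𝓝 0) := by
  have : ContinuousAt (fun θ => Real.cos θ / Real.sin θ) (π / 2) :=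
    Real.continuous_cos.continuousAt.div Real.continuous_sin.continuousAt (by simp)
  rw [funext fun θ => Real.cot_eq_cos_div_sin θ]
  simpa using this.tendsto

variable {F : ℂ → ℂ} {a C : ℝ}

theorem norm_mul_exp_cot_mul_sq_le (hF : Differentiable ℂ F)
    (hgrow : ∀ z : ℂ, ‖F z‖ ≤ C * Real.exp (a * ‖z‖ ^ 2))
    (hreal : ∀ x : ℝ, ‖F x‖ ≤ C * Real.exp (-a * x ^ 2)) {θ : ℝ} (hθ₀ : 0 < θ)
    (hθ : θ < π / 2) {z : ℂ} (hz₀ : 0 ≤ arg z) (hzθ : arg z ≤ θ) :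
    ‖F z * exp ((a + (a * Real.cot θ : ℝ) * I) * z ^ 2)‖ ≤ C := by
  set l : ℂ := a + (a * Real.cot θ : ℝ) * I
  have hnorm (w : ℂ) : ‖F w * exp (l * w ^ 2)‖ = ‖F w‖ * Real.exp (l * w ^ 2).re := by
    rw [norm_mul, norm_exp]
  refine PhragmenLindelof.sector (f := fun w => F w * exp (l * w ^ 2)) (ρ := 2) (A := C)
    (B := a + ‖l‖)
    (hF.mul ((differentiable_id.pow 2).const_mul l).cexp) hθ₀ zero_le_two (by linarith)
    (fun w => ?_) (fun x _ => ?_) (fun r hr => ?_) hz₀ hzθ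
  · have hre : (l * w ^ 2).re ≤ ‖l‖ * ‖w‖ ^ 2 :=
      (re_le_norm _).trans_eq (by rw [norm_mul, norm_pow])
    rw [hnorm, Real.rpow_two, add_mul a, Real.exp_add, ← mul_assoc]
    exact mul_le_mul (hgrow w) (Real.exp_le_exp.2 hre) (Real.exp_pos _).le
      ((norm_nonneg _).trans (hgrow w))
  · have hre : (l * (x : ℂ) ^ 2).re = a * x ^ 2 := by
      simp only [l, ← ofReal_pow, mul_re, mul_im, add_re, add_im, ofReal_re, ofReal_im, I_re, I_im]
      ring
    rw [hnorm, hre, ← neg_neg (a * x ^ 2)]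
    exact mul_exp_neg_le_of_le_mul_exp (by simpa using hreal x)
  · have hsin : Real.sin θ ≠ 0 := (Real.sin_pos_of_pos_of_lt_pi hθ₀ (by linarith)).ne'
    rw [hnorm, re_mul_sq_ofReal_mul_exp_mul_I hsin]
    refine mul_exp_neg_le_of_le_mul_exp ?_
    simpa [abs_of_nonneg hr] using hgrow (r * exp (θ * I))

theorem norm_mul_exp_mul_sq_le_of_re_nonneg_of_im_nonneg (hF : Differentiable ℂ F)
    (hgrow : ∀ z : ℂ, ‖F z‖ ≤ C * Real.exp (a * ‖z‖ ^ 2))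
    (hreal : ∀ x : ℝ, ‖F x‖ ≤ C * Real.exp (-a * x ^ 2)) {z : ℂ} (hre : 0 ≤ z.re)
    (him : 0 ≤ z.im) : ‖F z * exp (a * z ^ 2)‖ ≤ C := by
  have hnorm : ‖F z * exp (a * z ^ 2)‖ = ‖F z‖ * Real.exp (a * (z ^ 2).re) := by
    rw [norm_mul, norm_exp, re_ofReal_mul]
  rcases hre.eq_or_lt with hre | hre
  · have hsq : (z ^ 2).re = -‖z‖ ^ 2 := by
      rw [sq, mul_re, ← hre, Complex.sq_norm, normSq_apply, ← hre]; ring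
    rw [hnorm, hsq, mul_neg]
    exact mul_exp_neg_le_of_le_mul_exp (hgrow z)
  have hbound : ∀ θ ∈ Set.Ioo (arg z) (π / 2),
      ‖F z * exp (a * z ^ 2)‖ ≤ C * Real.exp (a * Real.cot θ * (z ^ 2).im) := by
    rintro θ ⟨hzθ, hθ⟩
    have hz₀ : 0 ≤ arg z := arg_nonneg_iff.2 him
    calc ‖F z * exp (a * z ^ 2)‖
        = ‖F z * exp ((a + (a * Real.cot θ : ℝ) * I) * z ^ 2)‖ *
            Real.exp (a * Real.cot θ * (z ^ 2).im) := by
          rw [hnorm, norm_mul, norm_exp, mul_assoc, ← Real.exp_add]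
          simp only [add_mul, add_re, mul_re, mul_im, ofReal_re, ofReal_im, I_re, I_im]
          ring_nf
      _ ≤ C * Real.exp (a * Real.cot θ * (z ^ 2).im) := by
          gcongr
          exact norm_mul_exp_cot_mul_sq_le hF hgrow hreal (hz₀.trans_lt hzθ) hθ hz₀ hzθ.le
  have hlim : Tendsto (fun θ => C * Real.exp (a * Real.cot θ * (z ^ 2).im)) (𝓝[<] (π / 2))
      (𝓝 C) := by
    simpa using (((Real.tendsto_cot_pi_div_two.const_mul a).mul_const _).rexp.const_mul C).mono_left
      nhdsWithin_le_nhds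
  exact ge_of_tendsto hlim
    (mem_of_superset (Ioo_mem_nhdsLT (arg_lt_pi_div_two_iff.2 (.inl hre))) hbound)

theorem norm_mul_exp_mul_sq_le (hF : Differentiable ℂ F)
    (hgrow : ∀ z : ℂ, ‖F z‖ ≤ C * Real.exp (a * ‖z‖ ^ 2))
    (hreal : ∀ x : ℝ, ‖F x‖ ≤ C * Real.exp (-a * x ^ 2)) (z : ℂ) :
    ‖F z * exp (a * z ^ 2)‖ ≤ C := by
  wlog hre : 0 ≤ z.re generalizing F z
  · simpa using this (hF.comp differentiable_neg) (fun w => by simpa using hgrow (-w))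
      (fun x => by simpa using hreal (-x)) (-z) (by simp; linarith)
  wlog him : 0 ≤ z.im generalizing F z
  · have hconj : Differentiable ℂ (conj ∘ F ∘ conj) := fun w =>
      differentiableAt_conj_conj_iff.2 (hF _)
    have := this hconj (fun w => by simpa using hgrow (conj w))
      (fun x => by simpa using hreal x) (conj z) (by simpa using hre) (by simp; linarith)
    simpa [norm_exp, sq] using this
  exact norm_mul_exp_mul_sq_le_of_re_nonneg_of_im_nonneg hF hgrow hreal hre him

theorem phragmen_lindelof_hardy_general (F : ℂ → ℂ) (hF : Differentiable ℂ F)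
    (a C : ℝ)
    (hgrow : ∀ z : ℂ, ‖F z‖ ≤ C * Real.exp (a * ‖z‖ ^ 2))
    (hreal : ∀ x : ℝ, ‖F x‖ ≤ C * Real.exp (-a * x ^ 2)) :
    ∃ c : ℂ, ∀ z : ℂ, F z = c * Complex.exp (-(a : ℂ) * z ^ 2) := by
  have hG : Differentiable ℂ fun z => F z * exp (a * z ^ 2) :=
    hF.mul ((differentiable_id.pow 2).const_mul _).cexp
  obtain ⟨c, hc⟩ := hG.exists_const_forall_eq_of_bounded <|
    isBounded_iff_forall_norm_le.2 ⟨C, by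
      rintro _ ⟨z, rfl⟩
      exact norm_mul_exp_mul_sq_le hF hgrow hreal z⟩
  refine ⟨c, fun z => ?_⟩
  rw [← hc z, neg_mul, Complex.exp_neg, mul_assoc, mul_inv_cancel₀ (Complex.exp_ne_zero _),
    mul_one]

/-- Phragmén–Lindelöf argument used in Hardy's proof: if `F` is entire,
`|F(z)| ≤ C e^{a|z|²}` for all `z`, and `|F(x)| ≤ C e^{-ax²}` for real `x`,
then `F(z) = c e^{-az²}` for some constant `c`. -/
theorem phragmen_lindelof_hardy (F : ℂ → ℂ) (hF : Differentiable ℂ F)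
    (a C : ℝ) (ha : 0 < a) (hC : 0 < C)
    (hgrow : ∀ z : ℂ, ‖F z‖ ≤ C * Real.exp (a * ‖z‖ ^ 2))
    (hreal : ∀ x : ℝ, ‖F x‖ ≤ C * Real.exp (-a * x ^ 2)) :
    ∃ c : ℂ, ∀ z : ℂ, F z = c * Complex.exp (-(a : ℂ) * z ^ 2) :=
  phragmen_lindelof_hardy_general F hF a C hgrow hreal
end

section
/- Segal–Bargmann characterization on S¹ (one direction): if h ∈ L²(S¹) and f = h * p_t for t > 0, then f extends to an entire 2π-periodic function on ℂ and ∫_0^{2π} ∫_ℝ |f(x+iy)|² q_{t/2}(y) dy dx < ∞, where q_s(y) = (4πs)^{-1/2} e^{-y²/(4s)} is the Euclidean heat kernel on ℝ. -/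
/-!
Expanding `h` in its Fourier series `∑ aₖ e^{ikx}`, the heat flow gives
`f = ∑ aₖ e^{-tk²} e^{ikx}`; the Gaussian decay of the coefficients makes this series converge
locally uniformly on `ℂ`, which yields the entire `2π`-periodic extension `F`. On the horizontal
line `Im z = y`, Parseval gives `∫ |F(x + iy)|² dx = 2π ∑ |aₖ|² e^{-2tk²} e^{-2ky}`. The weight
`q_{t/2}` is the density of the centred Gaussian of variance `t`, whose moment generating function
gives `∫ e^{-2ky} q_{t/2}(y) dy = e^{2tk²}`; so the weighted integral equals `2π ∑ |aₖ|²`, which is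
finite by Parseval for `h`.
-/

open MeasureTheory Real Complex ProbabilityTheory

open scoped ENNReal NNReal

lemma summable_exp_neg_mul_sq_add_abs_mul {t : ℝ} (ht : 0 < t) (R : ℝ) :
    Summable fun k : ℤ => rexp (-t * k ^ 2 + |(k : ℝ)| * R) := by
  have h := summable_pow_mul_jacobiTheta₂_term_bound (R / (2 * π)) (div_pos ht pi_pos) 0
  refine h.congr fun k => ?_
  rw [pow_zero, one_mul, Int.cast_abs]
  congr 1
  field_simp
  ring

lemma summable_norm_mul_exp_neg_mul_sq_mul_exp {a : ℤ → ℂ} (ha : Summable (‖a ·‖ ^ 2)) {t : ℝ}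
    (ht : 0 < t) (R : ℝ) :
    Summable fun k : ℤ => ‖a k * rexp (-t * k ^ 2)‖ * rexp (|(k : ℝ)| * R) := by
  refine (ha.add (summable_exp_neg_mul_sq_add_abs_mul (mul_pos two_pos ht) (2 * R))).of_nonneg_of_le
    (fun _ => by positivity) fun k => ?_
  set e := rexp (-t * k ^ 2 + |(k : ℝ)| * R)
  have he : rexp (-(2 * t) * k ^ 2 + |(k : ℝ)| * (2 * R)) = e ^ 2 := by
    rw [← Real.exp_nat_mul]
    ring_nf
  rw [norm_mul, norm_real, norm_of_nonneg (exp_pos _).le, mul_assoc, ← Real.exp_add, he]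
  -- `‖aₖ‖ eₖ ≤ ‖aₖ‖² + eₖ²`
  nlinarith [sq_nonneg (‖a k‖ - e), norm_nonneg (a k), exp_pos (-t * k ^ 2 + |(k : ℝ)| * R)]

lemma norm_mul_exp_neg_mul_sq_mul_exp (a : ℂ) (t s : ℝ) :
    ‖a * rexp (-t * s)‖ ^ 2 * rexp (2 * t * s) = ‖a‖ ^ 2 := by
  rw [norm_mul, norm_real, norm_of_nonneg (exp_pos _).le, mul_pow, mul_assoc, ← Real.exp_nat_mul,
    ← Real.exp_add, show ((2 : ℕ) : ℝ) * (-t * s) + 2 * t * s = 0 by push_cast; ring,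
    Real.exp_zero, mul_one]

lemma Complex.two_pi_ne_zero : (2 * π : ℂ) ≠ 0 :=
  mul_ne_zero two_ne_zero (ofReal_ne_zero.mpr pi_ne_zero)

lemma norm_cexp_I_mul (k : ℤ) (z : ℂ) : ‖cexp (I * k * z)‖ = rexp (-(k * z.im)) := by
  rw [Complex.norm_exp]
  congr 1
  simp

lemma norm_cexp_I_mul_le {R : ℝ} (k : ℤ) {z : ℂ} (hz : |z.im| ≤ R) :
    ‖cexp (I * k * z)‖ ≤ rexp (|(k : ℝ)| * R) := by
  rw [norm_cexp_I_mul, exp_le_exp]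
  calc -(k * z.im) ≤ |k * z.im| := neg_le_abs _
    _ = |(k : ℝ)| * |z.im| := abs_mul _ _
    _ ≤ |(k : ℝ)| * R := by gcongr

lemma norm_cexp_I_mul_ofReal (k : ℤ) (x : ℝ) : ‖cexp (I * k * x)‖ = 1 := by
  rw [norm_cexp_I_mul, ofReal_im, mul_zero, neg_zero, Real.exp_zero]

namespace AddCircle

lemma norm_fourier_apply {T : ℝ} (n : ℤ) (x : AddCircle T) : ‖fourier n x‖ = 1 :=
  Circle.norm_coe _

lemma continuous_tsum_smul_fourier {T : ℝ} {b : ℤ → ℂ} (hb : Summable (‖b ·‖)) :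
    Continuous fun x : AddCircle T => ∑' k, b k • fourier k x :=
  continuous_tsum (fun k => by fun_prop) hb fun k x => by
    rw [norm_smul, norm_fourier_apply, mul_one]

variable {T : ℝ} [Fact (0 < T)]

lemma fourierCoeff_tsum_smul_fourier {b : ℤ → ℂ} (hb : Summable (‖b ·‖)) :
    fourierCoeff (fun x : AddCircle T => ∑' k, b k • fourier k x) = b := by
  ext n
  have hint : ∀ k, Integrable (fun x : AddCircle T => fourier (-n) x • b k • fourier k x)
      haarAddCircle := fun k => (Continuous.integrable_of_hasCompactSupport (by fun_prop)
        (HasCompactSupport.of_compactSpace _))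
  have hnorm : ∀ k, ∫ x : AddCircle T, ‖fourier (-n) x • b k • fourier k x‖ ∂haarAddCircle
      = ‖b k‖ := fun k => by
    simp only [smul_eq_mul, norm_mul, norm_fourier_apply, one_mul, mul_one, integral_const,
      probReal_univ]
  rw [fourierCoeff]
  simp_rw [← tsum_const_smul'' (fourier (-n) _)]
  rw [← integral_tsum_of_summable_integral_norm hint (by simpa only [hnorm] using hb)]
  have hδ (k : ℤ) : ∫ x : AddCircle T, fourier (-n) x • fourier k x ∂haarAddCircle =
      Pi.single (M := fun _ => ℂ) k 1 n :=
    congrFun (fourierCoeff_fourier k) n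
  simp_rw [smul_comm _ (b _), integral_smul, hδ, Pi.single_apply, smul_eq_mul, mul_ite, mul_one,
    mul_zero]
  rw [tsum_eq_single n fun k hk => if_neg (Ne.symm hk), if_pos rfl]

lemma hasSum_sq_norm_of_tsum_smul_fourier {b : ℤ → ℂ} (hb : Summable (‖b ·‖)) :
    HasSum (fun k => ‖b k‖ ^ 2)
      (∫ x : AddCircle T, ‖∑' k, b k • fourier k x‖ ^ 2 ∂haarAddCircle) := by
  let g : C(AddCircle T, ℂ) := ⟨_, continuous_tsum_smul_fourier hb⟩
  have hg := ContinuousMap.coeFn_toLp (E := ℂ) (p := 2) (μ := haarAddCircle) (𝕜 := ℂ) g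
  have h := hasSum_sq_fourierCoeff (ContinuousMap.toLp (E := ℂ) 2 haarAddCircle ℂ g)
  have hcoeff : fourierCoeff (⇑g) = b := fourierCoeff_tsum_smul_fourier hb
  rw [fourierCoeff_congr_ae hg, hcoeff] at h
  convert h using 1
  refine (integral_congr_ae ?_).symm
  filter_upwards [hg] with x hx
  rw [hx]
  rfl

end AddCircle

noncomputable def fourierSeries (c : ℤ → ℂ) (z : ℂ) : ℂ := ∑' k : ℤ, c k * cexp (I * k * z)

lemma fourierSeries_add_two_pi (c : ℤ → ℂ) (z : ℂ) :
    fourierSeries c (z + 2 * π) = fourierSeries c z := by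
  refine tsum_congr fun k => ?_
  rw [show I * k * (z + 2 * π) = I * k * z + k * (2 * π * I) by ring, Complex.exp_add,
    exp_int_mul_two_pi_mul_I, mul_one]

lemma differentiable_fourierSeries {c : ℤ → ℂ}
    (hc : ∀ R, Summable fun k : ℤ => ‖c k‖ * rexp (|(k : ℝ)| * R)) :
    Differentiable ℂ (fourierSeries c) := by
  intro z
  set R := |z.im| + 1
  have hU : IsOpen {w : ℂ | |w.im| < R} := isOpen_lt (by fun_prop) continuous_const
  refine (differentiableOn_tsum_of_summable_norm (hc R) (fun k => by fun_prop) hU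
    fun k w hw => ?_).differentiableAt (hU.mem_nhds (by simp [R]))
  rw [norm_mul]
  gcongr
  exact norm_cexp_I_mul_le k (le_of_lt hw)

lemma fourier_coe_two_pi (k : ℤ) (x : ℝ) :
    fourier k (x : AddCircle (2 * π)) = cexp (I * k * x) := by
  rw [fourier_coe_apply]
  congr 1
  field_simp
  push_cast
  ring

lemma fourierSeries_ofReal_eq_tsum_fourier (b : ℤ → ℂ) (x : ℝ) :
    fourierSeries b x = ∑' k, b k • fourier k (x : AddCircle (2 * π)) := by
  simp_rw [fourier_coe_two_pi, smul_eq_mul]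
  rfl

lemma hasSum_sq_norm_fourierSeries {b : ℤ → ℂ} (hb : Summable (‖b ·‖)) :
    HasSum (fun k => ‖b k‖ ^ 2)
      ((2 * π)⁻¹ * ∫ x in Set.Ioc 0 (2 * π), ‖fourierSeries b x‖ ^ 2) := by
  have : Fact (0 < 2 * π) := ⟨two_pi_pos⟩
  have h := AddCircle.hasSum_sq_norm_of_tsum_smul_fourier (T := 2 * π) hb
  have hpre := AddCircle.integral_preimage (2 * π) 0
    fun p : AddCircle (2 * π) => ‖∑' k, b k • fourier k p‖ ^ 2
  rw [zero_add] at hpre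
  rw [AddCircle.integral_haarAddCircle, ← hpre, smul_eq_mul] at h
  simpa only [fourierSeries_ofReal_eq_tsum_fourier] using h

lemma fourierSeries_add_mul_I (c : ℤ → ℂ) (x y : ℝ) :
    fourierSeries c (x + y * I) = fourierSeries (fun k => c k * rexp (-(k * y))) x := by
  refine tsum_congr fun k => ?_
  dsimp only
  rw [ofReal_exp, mul_assoc (c k), ← Complex.exp_add]
  congr 2
  push_cast
  linear_combination (k * y : ℂ) * I_sq

lemma hasSum_sq_norm_mul_exp_fourierSeries {c : ℤ → ℂ}
    (hc : ∀ R, Summable fun k : ℤ => ‖c k‖ * rexp (|(k : ℝ)| * R)) (y : ℝ) :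
    HasSum (fun k : ℤ => ‖c k‖ ^ 2 * rexp (-2 * k * y))
      ((2 * π)⁻¹ * ∫ x in Set.Ioc 0 (2 * π), ‖fourierSeries c (x + y * I)‖ ^ 2) := by
  have hb : Summable fun k : ℤ => ‖c k * rexp (-(k * y))‖ := by
    refine (hc |y|).of_nonneg_of_le (fun _ => norm_nonneg _) fun k => ?_
    rw [norm_mul, norm_real, norm_of_nonneg (exp_pos _).le]
    gcongr
    exact (neg_le_abs _).trans (abs_mul _ _).le
  convert hasSum_sq_norm_fourierSeries hb using 1
  · ext k
    rw [norm_mul, norm_real, norm_of_nonneg (exp_pos _).le, mul_pow, ← Real.exp_nat_mul]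
    push_cast
    ring_nf
  · simp_rw [fourierSeries_add_mul_I]

lemma heatKernel_eq_gaussianPDFReal {t : ℝ} (ht : 0 < t) (y : ℝ) :
    (4 * π * (t / 2)) ^ (-(1 : ℝ) / 2) * rexp (-y ^ 2 / (4 * (t / 2))) =
      gaussianPDFReal 0 t.toNNReal y := by
  rw [gaussianPDFReal, Real.coe_toNNReal _ ht.le, sqrt_eq_rpow, ← rpow_neg (by positivity)]
  congr 2 <;> ring

lemma lintegral_exp_mul_mul_gaussianPDF (s : ℝ) {v : ℝ≥0} (hv : v ≠ 0) :
    ∫⁻ y, ENNReal.ofReal (rexp (s * y)) * gaussianPDF 0 v y =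
      ENNReal.ofReal (rexp (v * s ^ 2 / 2)) := by
  have hmgf : mgf id (gaussianReal 0 v) s = rexp (v * s ^ 2 / 2) := by
    simp [mgf_id_gaussianReal]
  rw [← hmgf, mgf]
  simp only [id]
  rw [ofReal_integral_eq_lintegral_ofReal (integrable_exp_mul_gaussianReal s)
    (ae_of_all _ fun _ => (exp_pos _).le), gaussianReal_of_var_ne_zero 0 hv,
    lintegral_withDensity_eq_lintegral_mul₀ (measurable_gaussianPDF 0 v).aemeasurable
      (by fun_prop)]
  simp_rw [Pi.mul_apply, mul_comm (gaussianPDF 0 v _)]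

lemma measurable_ofReal_norm_sq_fourierSeries_mul_gaussianPDF {c : ℤ → ℂ}
    (hc : ∀ R, Summable fun k : ℤ => ‖c k‖ * rexp (|(k : ℝ)| * R)) (v : ℝ≥0) :
    Measurable fun q : ℝ × ℝ =>
      ENNReal.ofReal (‖fourierSeries c (q.1 + q.2 * I)‖ ^ 2) * gaussianPDF 0 v q.2 :=
  (((differentiable_fourierSeries hc).continuous.comp (by fun_prop)).norm.pow 2).measurable
    |>.ennreal_ofReal.mul ((measurable_gaussianPDF 0 v).comp measurable_snd)

lemma lintegral_norm_sq_fourierSeries_mul_gaussianPDF {c : ℤ → ℂ}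
    (hc : ∀ R, Summable fun k : ℤ => ‖c k‖ * rexp (|(k : ℝ)| * R)) {v : ℝ≥0} (hv : v ≠ 0) :
    ∫⁻ q : ℝ × ℝ, ENNReal.ofReal (‖fourierSeries c (q.1 + q.2 * I)‖ ^ 2) * gaussianPDF 0 v q.2
        ∂(volume.restrict (Set.Ioc 0 (2 * π))).prod volume =
      ∑' k : ℤ, ENNReal.ofReal (2 * π * ‖c k‖ ^ 2 * rexp (2 * v * k ^ 2)) := by
  have hline (y : ℝ) : ∫⁻ x in Set.Ioc 0 (2 * π), ENNReal.ofReal (‖fourierSeries c (x + y * I)‖ ^ 2)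
      = ∑' k : ℤ, ENNReal.ofReal (2 * π * ‖c k‖ ^ 2 * rexp (-2 * k * y)) := by
    have h := (hasSum_sq_norm_mul_exp_fourierSeries hc y).mul_left (2 * π)
    rw [← mul_assoc, mul_inv_cancel₀ two_pi_pos.ne', one_mul] at h
    have hcont : Continuous fun x : ℝ => ‖fourierSeries c (x + y * I)‖ ^ 2 :=
      ((differentiable_fourierSeries hc).continuous.comp (by fun_prop)).norm.pow 2
    rw [← ofReal_integral_eq_lintegral_ofReal hcont.integrableOn_Ioc
      (ae_of_all _ fun _ => by positivity), ← h.tsum_eq,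
      ENNReal.ofReal_tsum_of_nonneg (fun _ => by positivity) h.summable]
    simp_rw [mul_assoc]
  rw [lintegral_prod_symm _
    (measurable_ofReal_norm_sq_fourierSeries_mul_gaussianPDF hc v).aemeasurable]
  simp_rw [lintegral_mul_const' _ _ gaussianPDF_ne_top, hline, ← ENNReal.tsum_mul_right]
  rw [lintegral_tsum fun k => by fun_prop]
  refine tsum_congr fun k => ?_
  have hA : 0 ≤ 2 * π * ‖c k‖ ^ 2 := by positivity
  simp_rw [ENNReal.ofReal_mul hA, mul_assoc (ENNReal.ofReal _)]
  rw [lintegral_const_mul' _ _ ENNReal.ofReal_ne_top, lintegral_exp_mul_mul_gaussianPDF _ hv]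
  ring_nf

lemma integrable_norm_sq_fourierSeries_mul_gaussianPDFReal {c : ℤ → ℂ}
    (hc : ∀ R, Summable fun k : ℤ => ‖c k‖ * rexp (|(k : ℝ)| * R)) {v : ℝ≥0} (hv : v ≠ 0)
    (hsum : Summable fun k : ℤ => ‖c k‖ ^ 2 * rexp (2 * v * k ^ 2)) :
    Integrable (fun q : ℝ × ℝ => ‖fourierSeries c (q.1 + q.2 * I)‖ ^ 2 * gaussianPDFReal 0 v q.2)
      ((volume.restrict (Set.Ioc 0 (2 * π))).prod volume) := by
  have hfin := integrable_toReal_of_lintegral_ne_top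
    (measurable_ofReal_norm_sq_fourierSeries_mul_gaussianPDF hc v).aemeasurable (by
    rw [lintegral_norm_sq_fourierSeries_mul_gaussianPDF hc hv, ← ENNReal.ofReal_tsum_of_nonneg
      (fun _ => by positivity) ((hsum.mul_left (2 * π)).congr fun k => by ring)]
    exact ENNReal.ofReal_ne_top)
  refine hfin.congr (ae_of_all _ fun q => ?_)
  simp only [gaussianPDF, ENNReal.toReal_mul, ENNReal.toReal_ofReal (sq_nonneg _),
    ENNReal.toReal_ofReal (gaussianPDFReal_nonneg _ _ _)]

lemma periodic_cexp_neg_I_mul (k : ℤ) :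
    Function.Periodic (fun v : ℝ => cexp (-(I * k * v))) (2 * π) := fun v => by
  dsimp only
  rw [show -(I * k * ↑(v + 2 * π)) = -(I * k * v) + (-k : ℤ) * (2 * π * I) by push_cast; ring,
    Complex.exp_add, exp_int_mul_two_pi_mul_I, mul_one]

lemma two_pi_mul_fourierCoeffOn (h : ℝ → ℂ) (k : ℤ) :
    2 * π * fourierCoeffOn two_pi_pos h k = ∫ v in 0..2 * π, h v * cexp (-(I * k * v)) := by
  rw [fourierCoeffOn_eq_integral, sub_zero, real_smul, ← mul_assoc, ofReal_div, ofReal_one,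
    ofReal_mul, ofReal_ofNat, mul_one_div_cancel two_pi_ne_zero, one_mul]
  refine intervalIntegral.integral_congr fun v _ => ?_
  rw [fourier_coe_apply, smul_eq_mul, mul_comm]
  congr 2
  field_simp
  push_cast
  ring

lemma integral_comp_sub_mul_cexp {h : ℝ → ℂ} (hper : Function.Periodic h (2 * π)) (x : ℝ)
    (k : ℤ) : ∫ u in 0..2 * π, h (x - u) * cexp (I * k * u) =
      2 * π * fourierCoeffOn two_pi_pos h k * cexp (I * k * x) := by
  have hg : Function.Periodic (fun v => h v * cexp (-(I * k * v))) (2 * π) :=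
    hper.mul (periodic_cexp_neg_I_mul k)
  calc ∫ u in 0..2 * π, h (x - u) * cexp (I * k * u)
      = ∫ u in 0..2 * π, cexp (I * k * x) * (h (x - u) * cexp (-(I * k * ↑(x - u)))) := by
        refine intervalIntegral.integral_congr fun u _ => ?_
        rw [mul_left_comm, ← Complex.exp_add]
        congr 2
        push_cast
        ring
    _ = cexp (I * k * x) * ∫ v in x - 2 * π..x - 2 * π + 2 * π, h v * cexp (-(I * k * v)) := by
        rw [intervalIntegral.integral_const_mul, sub_add_cancel,
          intervalIntegral.integral_comp_sub_left (fun v => h v * cexp (-(I * k * v))), sub_zero]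
    _ = 2 * π * fourierCoeffOn two_pi_pos h k * cexp (I * k * x) := by
        rw [hg.intervalIntegral_add_eq _ 0, zero_add, ← two_pi_mul_fourierCoeffOn, mul_comm]

lemma integral_comp_sub_mul_fourierSeries {h : ℝ → ℂ} (hper : Function.Periodic h (2 * π))
    (hint : IntervalIntegrable h volume 0 (2 * π)) {d : ℤ → ℂ} (hd : Summable (‖d ·‖)) (x : ℝ) :
    ∫ u in 0..2 * π, h (x - u) * ∑' k : ℤ, d k * cexp (I * k * u) =
      2 * π * fourierSeries (fun k => fourierCoeffOn two_pi_pos h k * d k) x := by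
  have hx : IntegrableOn (fun u => h (x - u)) (Set.Ioc 0 (2 * π)) := by
    have := (hper.intervalIntegrable₀ two_pi_pos.ne' hint x (x - 2 * π)).comp_sub_left x
    rw [sub_self, sub_sub_cancel] at this
    exact (intervalIntegrable_iff_integrableOn_Ioc_of_le two_pi_pos.le).mp this
  have hint_k (k : ℤ) : IntegrableOn (fun u : ℝ => h (x - u) * (d k * cexp (I * k * u)))
      (Set.Ioc 0 (2 * π)) :=
    hx.mul_bdd (c := ‖d k‖) (by fun_prop) (ae_of_all _ fun u => by
      rw [norm_mul, norm_cexp_I_mul_ofReal, mul_one])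
  have hnorm (k : ℤ) : ∫ u in Set.Ioc 0 (2 * π), ‖h (x - u) * (d k * cexp (I * k * u))‖ =
      ‖d k‖ * ∫ u in Set.Ioc 0 (2 * π), ‖h (x - u)‖ := by
    rw [← integral_const_mul]
    refine integral_congr_ae (ae_of_all _ fun u => ?_)
    dsimp only
    rw [norm_mul, norm_mul, norm_cexp_I_mul_ofReal, mul_one, mul_comm]
  rw [intervalIntegral.integral_of_le two_pi_pos.le, fourierSeries, ← tsum_mul_left]
  simp_rw [← tsum_mul_left]
  rw [← integral_tsum_of_summable_integral_norm hint_k (by simpa only [hnorm] using hd.mul_right _)]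
  refine tsum_congr fun k => ?_
  rw [← intervalIntegral.integral_of_le two_pi_pos.le]
  simp_rw [mul_left_comm (h _), intervalIntegral.integral_const_mul,
    integral_comp_sub_mul_cexp hper]
  ring

theorem segal_bargmann_circle_general (t : ℝ) (ht : 0 < t)
    (h : ℝ → ℂ) (hper : ∀ x, h (x + 2 * π) = h x)
    (hL2 : MeasureTheory.MemLp h 2 (volume.restrict (Set.Ioc 0 (2 * π))))
    (f : ℝ → ℂ)
    (hf : ∀ x : ℝ, f x = ((1 / (2 * π) : ℝ) : ℂ) * ∫ u in (0 : ℝ)..(2 * π),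
      h (x - u) * ∑' k : ℤ,
        ((Real.exp (-t * (k : ℝ) ^ 2) : ℝ) : ℂ) * Complex.exp (Complex.I * k * u)) :
    ∃ F : ℂ → ℂ, Differentiable ℂ F ∧ (∀ z, F (z + 2 * π) = F z) ∧
      (∀ x : ℝ, F x = f x) ∧
      Integrable (fun q : ℝ × ℝ => ‖F (q.1 + q.2 * Complex.I)‖ ^ 2 *
          ((4 * π * (t / 2)) ^ (-(1 : ℝ) / 2) * Real.exp (-q.2 ^ 2 / (4 * (t / 2)))))
        ((volume.restrict (Set.Ioc 0 (2 * π))).prod volume) := by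
  set a := fourierCoeffOn two_pi_pos h
  set c : ℤ → ℂ := fun k => a k * rexp (-t * k ^ 2)
  have ha : Summable (‖a ·‖ ^ 2) := (hasSum_sq_fourierCoeffOn two_pi_pos hL2).summable
  have hc := summable_norm_mul_exp_neg_mul_sq_mul_exp ha ht
  have hd : Summable fun k : ℤ => ‖((rexp (-t * k ^ 2) : ℝ) : ℂ)‖ := by
    refine (summable_exp_neg_mul_sq_add_abs_mul ht 0).congr fun k => ?_
    rw [norm_real, norm_of_nonneg (exp_pos _).le, mul_zero, add_zero]
  have hint : IntervalIntegrable h volume 0 (2 * π) :=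
    (intervalIntegrable_iff_integrableOn_Ioc_of_le two_pi_pos.le).mpr (hL2.integrable one_le_two)
  refine ⟨fourierSeries c, differentiable_fourierSeries hc, fourierSeries_add_two_pi c,
    fun x => ?_, ?_⟩
  · rw [hf x, integral_comp_sub_mul_fourierSeries hper hint hd x, ← mul_assoc, ofReal_div,
      ofReal_one, ofReal_mul, ofReal_ofNat, one_div_mul_cancel two_pi_ne_zero, one_mul]
  · simp_rw [heatKernel_eq_gaussianPDFReal ht]
    refine integrable_norm_sq_fourierSeries_mul_gaussianPDFReal hc (by simpa using ht)
      (ha.congr fun k => ?_)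
    rw [Real.coe_toNNReal _ ht.le, norm_mul_exp_neg_mul_sq_mul_exp]

/-- Segal–Bargmann characterization on `S¹` (one direction): if `h ∈ L²(S¹)` and
`f = h * p_t` with `t > 0`, then `f` extends to an entire 2π-periodic function `F` on ℂ with
`∫₀^{2π} ∫_ℝ |F(x+iy)|² q_{t/2}(y) dy dx < ∞`, where `q_s` is the Euclidean heat kernel. -/
theorem segal_bargmann_circle (t : ℝ) (ht : 0 < t)
    (h : ℝ → ℂ) (hmeas : Measurable h) (hper : ∀ x, h (x + 2 * π) = h x)
    (hL2 : MeasureTheory.MemLp h 2 (volume.restrict (Set.Ioc 0 (2 * π))))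
    (f : ℝ → ℂ)
    (hf : ∀ x : ℝ, f x = ((1 / (2 * π) : ℝ) : ℂ) * ∫ u in (0 : ℝ)..(2 * π),
      h (x - u) * ∑' k : ℤ,
        ((Real.exp (-t * (k : ℝ) ^ 2) : ℝ) : ℂ) * Complex.exp (Complex.I * k * u)) :
    ∃ F : ℂ → ℂ, Differentiable ℂ F ∧ (∀ z, F (z + 2 * π) = F z) ∧
      (∀ x : ℝ, F x = f x) ∧
      Integrable (fun q : ℝ × ℝ => ‖F (q.1 + q.2 * Complex.I)‖ ^ 2 *
          ((4 * π * (t / 2)) ^ (-(1 : ℝ) / 2) * Real.exp (-q.2 ^ 2 / (4 * (t / 2)))))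
        ((volume.restrict (Set.Ioc 0 (2 * π))).prod volume) :=
  segal_bargmann_circle_general t ht h hper hL2 f hf
end
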